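/- Let n ≥ 1 and let Z ∈ so(n) be such that I − ZᵀZ is positive definite. Then ‖√(I − ZᵀZ) − I + ½ ZᵀZ‖_F ≤ ½ ‖Z‖_F⁴; equivalently, the normal adjustment C(Z) = √(I − ZᵀZ) − I satisfies ‖C(Z) − ½ S(Z,Z)‖_F ≤ ½ ‖Z‖_F⁴, where S(Z,Z) = Z² = −ZᵀZ is the second fundamental form of SO(n) evaluated at (Z,Z). -/

import Mathlib

/-!
With `S = √(I - ZᵀZ)` the error term is `S - I + ½ ZᵀZ = -½ (I - S)²`. Since
`ZᵀZ = I - S² = (I - S)(I + S)` and `(I + S)⁴ - I` is positive semidefinite, the difference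
`(ZᵀZ)⁴ - (I - S)⁴ = (I - S)² ((I + S)⁴ - I) (I - S)²` is positive semidefinite, so its trace is
nonnegative: `‖(I - S)²‖_F ≤ ‖(ZᵀZ)²‖_F ≤ ‖Z‖_F⁴`.
-/

open Matrix

/-- The Frobenius norm `‖A‖_F = √(tr (Aᵀ A))` of a real square matrix. -/
noncomputable def frobeniusNorm {n : ℕ} (A : Matrix (Fin n) (Fin n) ℝ) : ℝ :=
  Real.sqrt ((Aᵀ * A).trace)

open scoped ComplexOrder in
noncomputable def Matrix.PosSemidef.sqrt {n 𝕜 : Type*} [Fintype n] [RCLike 𝕜] [DecidableEq n]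
    {A : Matrix n n 𝕜} (hA : A.PosSemidef) : Matrix n n 𝕜 :=
  hA.1.eigenvectorUnitary.1 * diagonal ((↑) ∘ (√·) ∘ hA.1.eigenvalues) *
    (star hA.1.eigenvectorUnitary : Matrix n n 𝕜)

namespace Matrix.PosSemidef

open scoped ComplexOrder

variable {n 𝕜 : Type*} [Fintype n] [RCLike 𝕜] [DecidableEq n] {A : Matrix n n 𝕜}

lemma posSemidef_sqrt (hA : A.PosSemidef) : hA.sqrt.PosSemidef := by
  unfold Matrix.PosSemidef.sqrt
  rw [star_eq_conjTranspose]
  refine (PosSemidef.diagonal fun i => ?_).mul_mul_conjTranspose_same _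
  simp only [Pi.zero_apply, Function.comp_apply]
  exact_mod_cast Real.sqrt_nonneg _

lemma sqrt_mul_self (hA : A.PosSemidef) : hA.sqrt * hA.sqrt = A := by
  unfold Matrix.PosSemidef.sqrt
  set U : Matrix n n 𝕜 := hA.1.eigenvectorUnitary.1
  set D : Matrix n n 𝕜 := diagonal ((↑) ∘ (√·) ∘ hA.1.eigenvalues)
  have hU : star U * U = 1 := Unitary.coe_star_mul_self _
  have hD : D * D = diagonal (RCLike.ofReal ∘ hA.1.eigenvalues) := by
    rw [diagonal_mul_diagonal]
    congr 1; ext i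
    simp only [Function.comp_apply]
    rw [← RCLike.ofReal_mul, Real.mul_self_sqrt (hA.eigenvalues_nonneg i)]
  calc U * D * star U * (U * D * star U) = U * (D * (star U * U) * D) * star U := by
        simp only [Matrix.mul_assoc]
    _ = A := by
      rw [hU, Matrix.mul_one, hD]
      conv_rhs => rw [hA.1.spectral_theorem]
      simp [U, Unitary.conjStarAlgAut_apply]

end Matrix.PosSemidef

attribute [local instance] Matrix.frobeniusSeminormedAddCommGroup Matrix.frobeniusNormedSpace

lemma Matrix.trace_transpose_mul_self_eq_frobenius_norm_sq {m n : Type*} [Fintype m] [Fintype n]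
    (A : Matrix m n ℝ) : (Aᵀ * A).trace = ‖A‖ ^ 2 := by
  rw [frobenius_norm_def, ← Real.rpow_natCast _ 2, ← Real.rpow_mul (by positivity)]
  norm_num
  simp only [trace, diag, mul_apply, transpose_apply, sq]
  exact Finset.sum_comm

lemma frobeniusNorm_eq_norm {n : ℕ} (A : Matrix (Fin n) (Fin n) ℝ) : frobeniusNorm A = ‖A‖ := by
  rw [frobeniusNorm, trace_transpose_mul_self_eq_frobenius_norm_sq, Real.sqrt_sq (norm_nonneg A)]

lemma Matrix.IsHermitian.frobenius_norm_sq {n : Type*} [Fintype n] {A : Matrix n n ℝ}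
    (hA : A.IsHermitian) : ‖A‖ ^ 2 = (A * A).trace := by
  rw [← trace_transpose_mul_self_eq_frobenius_norm_sq, ← conjTranspose_eq_transpose_of_trivial,
    hA.eq]

lemma one_sub_sq_pow_four_eq {R : Type*} [Ring R] (S : R) :
    (1 - S ^ 2) ^ 4 = (1 - S) ^ 4 + (1 - S) ^ 2 * ((1 + S) ^ 4 - 1) * (1 - S) ^ 2 := by
  noncomm_ring

section PositiveSemidefinite

variable {n : Type*} [Fintype n] [DecidableEq n] {S : Matrix n n ℝ}

lemma Matrix.PosSemidef.one_add_pow_four_sub_one (hS : S.PosSemidef) :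
    ((1 + S) ^ 4 - 1).PosSemidef := by
  have hexp : (1 + S) ^ 4 - 1 = 4 • S + 6 • S ^ 2 + 4 • S ^ 3 + S ^ 4 := by noncomm_ring
  simp only [hexp, ← Nat.cast_smul_eq_nsmul ℝ]
  exact (((hS.smul (by norm_num)).add ((hS.pow 2).smul (by norm_num))).add
    ((hS.pow 3).smul (by norm_num))).add (hS.pow 4)

lemma Matrix.PosSemidef.frobenius_norm_one_sub_sq_le (hS : S.PosSemidef) :
    ‖(1 - S) ^ 2‖ ≤ ‖(1 - S ^ 2) ^ 2‖ := by
  have hP : (1 - S).IsHermitian := isHermitian_one.sub hS.1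
  have hA : (1 - S ^ 2).IsHermitian := isHermitian_one.sub (hS.1.pow 2)
  have hconj : ((1 - S) ^ 2 * ((1 + S) ^ 4 - 1) * (1 - S) ^ 2).PosSemidef := by
    have := hS.one_add_pow_four_sub_one.conjTranspose_mul_mul_same ((1 - S) ^ 2)
    rwa [(hP.pow 2).eq] at this
  have htrace : ((1 - S) ^ 4).trace ≤ ((1 - S ^ 2) ^ 4).trace := by
    rw [one_sub_sq_pow_four_eq, trace_add]
    linarith [hconj.trace_nonneg]
  rw [← sq_le_sq₀ (norm_nonneg _) (norm_nonneg _), (hP.pow 2).frobenius_norm_sq,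
    (hA.pow 2).frobenius_norm_sq, ← pow_add, ← pow_add]
  exact htrace

end PositiveSemidefinite

lemma Matrix.frobenius_norm_transpose_mul_self_sq_le {m n : Type*} [Fintype m] [Fintype n]
    [DecidableEq n] (Z : Matrix m n ℝ) : ‖(Zᵀ * Z) ^ 2‖ ≤ ‖Z‖ ^ 4 :=
  calc ‖(Zᵀ * Z) ^ 2‖ ≤ ‖Zᵀ * Z‖ * ‖Zᵀ * Z‖ := by rw [sq]; exact frobenius_norm_mul _ _
    _ ≤ (‖Zᵀ‖ * ‖Z‖) * (‖Zᵀ‖ * ‖Z‖) := by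
        gcongr <;> exact frobenius_norm_mul _ _
    _ = ‖Z‖ ^ 4 := by rw [frobenius_norm_transpose]; ring

theorem stmt2_general {n : ℕ} (Z : Matrix (Fin n) (Fin n) ℝ)
    (hpd : (1 - Zᵀ * Z).PosDef) :
    frobeniusNorm (hpd.posSemidef.sqrt - 1 + (1 / 2 : ℝ) • (Zᵀ * Z))
      ≤ (1 / 2 : ℝ) * (frobeniusNorm Z) ^ 4 := by
  set S := hpd.posSemidef.sqrt
  have hS : S.PosSemidef := hpd.posSemidef.posSemidef_sqrt
  have hZZ : Zᵀ * Z = 1 - S ^ 2 := by rw [sq, hpd.posSemidef.sqrt_mul_self, sub_sub_cancel]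
  have herror : S - 1 + (1 / 2 : ℝ) • (Zᵀ * Z) = -((1 / 2 : ℝ) • (1 - S) ^ 2) := by
    rw [hZZ, sq, sq, sub_mul, mul_sub, mul_sub, one_mul, mul_one, one_mul]
    module
  rw [herror, frobeniusNorm_eq_norm, frobeniusNorm_eq_norm, norm_neg, norm_smul,
    Real.norm_of_nonneg (by norm_num)]
  gcongr
  calc ‖(1 - S) ^ 2‖ ≤ ‖(1 - S ^ 2) ^ 2‖ := hS.frobenius_norm_one_sub_sq_le
    _ = ‖(Zᵀ * Z) ^ 2‖ := by rw [hZZ]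
    _ ≤ ‖Z‖ ^ 4 := frobenius_norm_transpose_mul_self_sq_le Z

/-- For skew-symmetric `Z` with `I - ZᵀZ` positive definite, the
normal adjustment `C(Z) = √(I - ZᵀZ) - I` satisfies
`‖C(Z) - ½ S(Z,Z)‖_F = ‖√(I - ZᵀZ) - I + ½ ZᵀZ‖_F ≤ ½ ‖Z‖_F⁴`. -/
theorem stmt2 {n : ℕ} (hn : 1 ≤ n) (Z : Matrix (Fin n) (Fin n) ℝ)
    (hZ : Zᵀ = -Z) (hpd : (1 - Zᵀ * Z).PosDef) :
    frobeniusNorm (hpd.posSemidef.sqrt - 1 + (1 / 2 : ℝ) • (Zᵀ * Z))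
      ≤ (1 / 2 : ℝ) * (frobeniusNorm Z) ^ 4 :=
  stmt2_general Z hpd
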